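/- arXiv:2201.02134 — 3 statements merged into one kernel-verified Lean document; each statement's English description precedes it below -/
import Mathlib

section
/- For each t < 0, the Angenent oval a_t = {(x,y) ∈ ℝ² : cos x = e^t cosh y, |x| < π/2} is a smooth closed curve, and the family {a_t}_{t<0} is a solution of the curve shortening flow: the normal velocity of the family equals the curvature at each point. -/
/-!
On the level set `cos x = e^t cosh y` the identities `sin² x = 1 - cos² x` and
`cosh² y - sinh² y = 1` give `|∇F|² = 1 - e^{2t}`, which is positive for `t < 0`.
Moreover `F_xx = -cos x` and `F_yy = -e^t cosh y` agree there, so the Hessian is a scalar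
multiple `λ I` of the identity and the curvature term `ΔF - Hess F(∇F,∇F)/|∇F|²` equals
`2λ - λ = λ = F_t`. Compactness holds because the oval is closed (on `|x| = π/2` the cosine
vanishes while `e^t cosh y > 0`) and bounded (`|y| < cosh y ≤ e^{-t}`).
-/

open Real

/-- The Angenent oval at time `t`, as a subset of `ℝ²`. -/
def angenentOval (t : ℝ) : Set (ℝ × ℝ) :=
  {p : ℝ × ℝ | Real.cos p.1 = Real.exp t * Real.cosh p.2 ∧ |p.1| < π / 2}

/-- The defining function `F(t,x,y) = cos x - e^t cosh y` of the Angenent ovals. -/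
noncomputable def angenentF (t x y : ℝ) : ℝ := Real.cos x - Real.exp t * Real.cosh y

open Set

lemma abs_lt_cosh (y : ℝ) : |y| < cosh y :=
  cosh_abs y ▸ (self_le_sinh_iff.2 (abs_nonneg y)).trans_lt (sinh_lt_cosh _)

lemma angenentOval_eq (t : ℝ) :
    angenentOval t =
      {p : ℝ × ℝ | cos p.1 = exp t * cosh p.2} ∩ {p : ℝ × ℝ | |p.1| ≤ π / 2} := by
  ext p
  refine ⟨fun ⟨hF, hx⟩ => ⟨hF, hx.le⟩, fun ⟨hF, hx⟩ => ⟨hF, hx.lt_of_ne fun hπ => ?_⟩⟩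
  have : 0 < cos p.1 := hF ▸ mul_pos (exp_pos t) (cosh_pos p.2)
  rw [← cos_abs, hπ, cos_pi_div_two] at this
  exact this.false

lemma isClosed_angenentOval (t : ℝ) : IsClosed (angenentOval t) := by
  rw [angenentOval_eq]
  exact (isClosed_eq (by fun_prop) (by fun_prop)).inter (isClosed_le (by fun_prop) (by fun_prop))

lemma angenentOval_subset_Icc_prod_Icc (t : ℝ) :
    angenentOval t ⊆ Icc (-(π / 2)) (π / 2) ×ˢ Icc (-exp (-t)) (exp (-t)) := by
  rintro ⟨x, y⟩ ⟨hF, hx⟩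
  have hcosh : cosh y ≤ exp (-t) := by
    rw [exp_neg, inv_eq_one_div, le_div_iff₀' (exp_pos t), ← hF]
    exact cos_le_one x
  exact ⟨abs_le.1 hx.le, abs_le.1 ((abs_lt_cosh y).le.trans hcosh)⟩

lemma isCompact_angenentOval (t : ℝ) : IsCompact (angenentOval t) :=
  (isCompact_Icc.prod isCompact_Icc).of_isClosed_subset (isClosed_angenentOval t)
    (angenentOval_subset_Icc_prod_Icc t)

lemma sin_sq_add_exp_mul_sinh_sq {t x y : ℝ} (hF : cos x = exp t * cosh y) :
    sin x ^ 2 + (exp t * sinh y) ^ 2 = 1 - exp t ^ 2 := by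
  have hsin := sin_sq_add_cos_sq x
  have hcosh := cosh_sq_sub_sinh_sq y
  rw [hF] at hsin
  linear_combination hsin - exp t ^ 2 * hcosh

lemma sin_sq_add_exp_mul_sinh_sq_pos {t x y : ℝ} (ht : t < 0)
    (hF : cos x = exp t * cosh y) : 0 < sin x ^ 2 + (exp t * sinh y) ^ 2 := by
  rw [sin_sq_add_exp_mul_sinh_sq hF, sub_pos, sq_lt_one_iff₀ (exp_pos t).le]
  exact exp_lt_one_iff.2 ht

lemma eq_add_sub_mul_add_mul_div {a u v : ℝ} (h : u + v ≠ 0) :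
    a = a + a - (a * u + a * v) / (u + v) := by
  rw [← mul_add, mul_div_cancel_right₀ a h, add_sub_cancel_right]

/-- For each `t < 0` the Angenent oval `{cos x = e^t cosh y, |x| < π/2}` is a smooth
closed (compact) curve: it is compact and is a regular level set of the smooth
function `F = cos x - e^t cosh y` (the spatial gradient `(-sin x, -e^t sinh y)` never
vanishes on it); and the family solves curve shortening flow in the level-set
formulation: at every point of the level set,
`F_t = ΔF - Hess F(∇F,∇F)/|∇F|²`, i.e. the normal velocity `-F_t/|∇F|` equals the
curvature `-div(∇F/|∇F|)`. -/
theorem angenentOval_is_CSF :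
    ∀ t < (0 : ℝ),
      IsCompact (angenentOval t) ∧
      (∀ p ∈ angenentOval t, (-Real.sin p.1, -Real.exp t * Real.sinh p.2) ≠ (0, 0)) ∧
      (∀ p ∈ angenentOval t,
        -- F_t
        (-Real.exp t * Real.cosh p.2) =
          -- ΔF = F_xx + F_yy
          ((-Real.cos p.1) + (-Real.exp t * Real.cosh p.2)) -
          -- Hess F(∇F,∇F)/|∇F|², with F_xy = 0
          ((-Real.cos p.1) * (-Real.sin p.1) ^ 2 +
              (-Real.exp t * Real.cosh p.2) * (-Real.exp t * Real.sinh p.2) ^ 2) /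
            ((-Real.sin p.1) ^ 2 + (-Real.exp t * Real.sinh p.2) ^ 2)) := by
  intro t ht
  refine ⟨isCompact_angenentOval t, ?_, ?_⟩
  · rintro ⟨x, y⟩ ⟨hF, -⟩ hgrad
    have hpos := sin_sq_add_exp_mul_sinh_sq_pos ht hF
    simp only [Prod.mk.injEq, neg_eq_zero, neg_mul] at hgrad
    rw [hgrad.1, hgrad.2] at hpos
    norm_num at hpos
  · rintro ⟨x, y⟩ ⟨hF, -⟩
    have hgrad : (-sin x) ^ 2 + (-exp t * sinh y) ^ 2 ≠ 0 := by
      simpa only [neg_sq, neg_mul] using (sin_sq_add_exp_mul_sinh_sq_pos ht hF).ne'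
    have hHess : -cos x = -exp t * cosh y := by rw [hF, neg_mul]
    rw [hHess]
    exact eq_add_sub_mul_add_mul_div hgrad
end

section
/- The Angenent oval a_t = {cos x = e^t cosh y}, t < 0, written locally as a graph, is a convex curve: parametrizing the upper half as y = arccosh(e^{-t} cos x), the enclosed region {(x,y) : cos x ≥ e^t cosh y} is a convex subset of ℝ². -/
open Real Set

/-!
The region is the superlevel set `{cos x - e^t cosh y ≥ 0}` over the strip `|x| ≤ π/2`, and
`cos x - e^t cosh y` is concave there: `cos` is concave on `[-π/2, π/2]` and `cosh` is convex,
being the average of `exp` and `exp ∘ neg`.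
-/

lemma convexOn_cosh : ConvexOn ℝ univ cosh := by
  have hsum : ConvexOn ℝ univ fun x => (1 / 2 : ℝ) • (exp x + exp (-x)) :=
    (convexOn_exp.add (convexOn_exp.comp_affineMap (-AffineMap.id ℝ ℝ))).smul (by norm_num)
  convert hsum using 2 with x
  rw [cosh_eq, smul_eq_mul]
  ring

lemma ConcaveOn.sub_convexOn_prod {E F : Type*} [AddCommGroup E] [Module ℝ E]
    [AddCommGroup F] [Module ℝ F] {s : Set E} {u : Set F} {f : E → ℝ} {g : F → ℝ}
    (hf : ConcaveOn ℝ s f) (hg : ConvexOn ℝ u g) :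
    ConcaveOn ℝ (s ×ˢ u) fun p => f p.1 - g p.2 := by
  have hs : Convex ℝ (s ×ˢ u) := hf.1.prod hg.1
  exact ((hf.comp_linearMap (LinearMap.fst ℝ E F)).subset (fun p hp => hp.1) hs).sub
    ((hg.comp_linearMap (LinearMap.snd ℝ E F)).subset (fun p hp => hp.2) hs)

/-- For `t < 0`, the region enclosed by the Angenent oval
`{(x,y) : |x| ≤ π/2, cos x ≥ e^t cosh y}` is a convex subset of `ℝ²`; i.e. the
Angenent oval, as the boundary of this region, is a convex curve. -/
theorem angenentOval_convex :
    ∀ t < (0 : ℝ),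
      Convex ℝ {p : ℝ × ℝ | |p.1| ≤ π / 2 ∧ Real.exp t * Real.cosh p.2 ≤ Real.cos p.1} := by
  intro t _
  have hconcave : ConcaveOn ℝ (Icc (-(π / 2)) (π / 2) ×ˢ univ)
      fun p : ℝ × ℝ => cos p.1 - exp t * cosh p.2 :=
    strictConcaveOn_cos_Icc.concaveOn.sub_convexOn_prod (convexOn_cosh.smul (exp_pos t).le)
  convert hconcave.convex_ge 0 using 1
  ext p
  simp [abs_le, sub_nonneg]
end

section
/- Let σ be a unit-speed planar curve with unit tangent T satisfying the ramp condition ⟨T, e₁⟩ ≥ 0 and curvature bound |κ| ≤ C. Suppose two points p = σ(s₁), q = σ(s₂) with s₁ < s₂ satisfy |p - q| < ε and ⟨T(s₁), T(s₂)⟩ ≤ 0. Then the total turning satisfies ∫_{s₁}^{s₂} |κ| ds ≥ π/2, and hence s₂ - s₁ ≥ π/(2C). -/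
open Real intervalIntegral

/-- Core analytic lemma: if `(f, g)` is a differentiable curve on the unit circle
staying in the closed right half plane (`f ≥ 0`), then the variation of
`arcsin ∘ g` between two points is bounded by the integral of the speed. -/
lemma ramp_arcsin_diff_le (f g f' g' : ℝ → ℝ) (s₁ s₂ : ℝ) (h₁₂ : s₁ ≤ s₂)
    (hf : ∀ s, HasDerivAt f (f' s) s) (hg : ∀ s, HasDerivAt g (g' s) s)
    (hg'c : Continuous g')
    (hNc : Continuous fun s => Real.sqrt (f' s ^ 2 + g' s ^ 2))
    (hunit : ∀ s, f s ^ 2 + g s ^ 2 = 1) (hfpos : ∀ s, 0 ≤ f s) :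
    |Real.arcsin (g s₂) - Real.arcsin (g s₁)| ≤
      ∫ s in s₁..s₂, Real.sqrt (f' s ^ 2 + g' s ^ 2) := by
  set N : ℝ → ℝ := fun s => Real.sqrt (f' s ^ 2 + g' s ^ 2) with hNdef
  have hNnonneg : ∀ s, 0 ≤ N s := fun s => Real.sqrt_nonneg _
  have hg1 : ∀ s, |g s| ≤ 1 := by
    intro s
    have := hunit s
    nlinarith [sq_nonneg (f s), abs_nonneg (g s), sq_abs (g s)]
  have hgdiff : Differentiable ℝ g := fun s => (hg s).differentiableAt
  have hgc : Continuous g := hgdiff.continuous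
  -- orthogonality: f f' + g g' = 0
  have horth : ∀ s, f s * f' s + g s * g' s = 0 := by
    intro s
    have h1 : HasDerivAt (fun s => f s ^ 2 + g s ^ 2)
        (2 * f s * f' s + 2 * g s * g' s) s := by
      have := ((hf s).pow 2).add ((hg s).pow 2)
      simp [mul_comm, mul_assoc, mul_left_comm] at this ⊢; exact this
    have h2 : (fun s => f s ^ 2 + g s ^ 2) = fun _ => (1 : ℝ) := funext hunit
    rw [h2] at h1
    have := h1.unique (hasDerivAt_const s 1)
    linarith
  -- key identity |g'| = f * N
  have hkey : ∀ s, |g' s| = f s * N s := by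
    intro s
    have hu := hunit s
    have ho := horth s
    have hsq : (g' s) ^ 2 = (f s * N s) ^ 2 := by
      have hN2 : N s ^ 2 = f' s ^ 2 + g' s ^ 2 := by
        rw [hNdef]
        exact Real.sq_sqrt (by positivity)
      have ho2 : (f s * f' s) ^ 2 = (g s * g' s) ^ 2 := by
        have h : f s * f' s = -(g s * g' s) := by linarith
        rw [h]; ring
      linear_combination (-(g' s ^ 2)) * hu + (-(f s ^ 2)) * hN2 - ho2
    calc |g' s| = Real.sqrt ((g' s) ^ 2) := (Real.sqrt_sq_eq_abs _).symm
      _ = Real.sqrt ((f s * N s) ^ 2) := by rw [hsq]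
      _ = f s * N s := Real.sqrt_sq (mul_nonneg (hfpos s) (hNnonneg s))
  have hfg : ∀ s, f s = Real.sqrt (1 - g s ^ 2) := by
    intro s
    have h : f s ^ 2 = 1 - g s ^ 2 := by linarith [hunit s]
    rw [← h, Real.sqrt_sq (hfpos s)]
  have hNint : IntervalIntegrable N MeasureTheory.volume s₁ s₂ :=
    hNc.intervalIntegrable _ _
  -- for each r ∈ (0,1), |arcsin (r g s₂) - arcsin (r g s₁)| ≤ ∫ N
  have hr : ∀ r : ℝ, r ∈ Set.Ioo (0:ℝ) 1 →
      |Real.arcsin (r * g s₂) - Real.arcsin (r * g s₁)| ≤ ∫ s in s₁..s₂, N s := by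
    intro r hrm
    obtain ⟨hr0, hr1⟩ := hrm
    have hrg : ∀ s, |r * g s| < 1 := by
      intro s
      rw [abs_mul, abs_of_pos hr0]
      calc r * |g s| ≤ r * 1 := by nlinarith [hg1 s, abs_nonneg (g s)]
        _ < 1 := by linarith
    set h' : ℝ → ℝ := fun s => (1 / Real.sqrt (1 - (r * g s) ^ 2)) * (r * g' s)
      with hh'def
    have hden : ∀ s, 0 < Real.sqrt (1 - (r * g s) ^ 2) := by
      intro s
      apply Real.sqrt_pos.2
      nlinarith [hrg s, abs_nonneg (r * g s), sq_abs (r * g s)]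
    have hhd : ∀ s, HasDerivAt (fun t => Real.arcsin (r * g t)) (h' s) s := by
      intro s
      have h1 : HasDerivAt (fun t => r * g t) (r * g' s) s := (hg s).const_mul r
      have h2 := Real.hasDerivAt_arcsin (x := r * g s)
        (by intro h; have := hrg s; rw [h] at this; simp at this)
        (by intro h; have := hrg s; rw [h] at this; simp at this)
      exact h2.comp s h1
    have hcont : Continuous h' := by
      apply Continuous.mul
      · apply Continuous.div continuous_const
        · exact Real.continuous_sqrt.comp (by continuity)
        · exact fun s => (hden s).ne'
      · exact continuous_const.mul hg'c
    have hb : ∀ s, |h' s| ≤ N s := by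
      intro s
      have hD := hden s
      have hfD : f s ≤ Real.sqrt (1 - (r * g s) ^ 2) := by
        rw [hfg s]
        apply Real.sqrt_le_sqrt
        have hr2 : r ^ 2 ≤ 1 := by nlinarith
        nlinarith [mul_nonneg (sq_nonneg (g s)) (sub_nonneg.2 hr2)]
      have habs : |h' s| = (1 / Real.sqrt (1 - (r * g s) ^ 2)) * (r * |g' s|) := by
        rw [hh'def]
        rw [abs_mul, abs_mul, abs_of_pos (by positivity : (0:ℝ) < 1 / Real.sqrt (1 - (r * g s) ^ 2)),
          abs_of_pos hr0]
      rw [habs, hkey s, one_div, inv_mul_eq_div, div_le_iff₀ hD]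
      nlinarith [mul_le_mul_of_nonneg_left hfD (hNnonneg s),
        mul_nonneg (mul_nonneg (sub_nonneg.2 hr1.le) (hfpos s)) (hNnonneg s)]
    have heq : (∫ s in s₁..s₂, h' s)
        = Real.arcsin (r * g s₂) - Real.arcsin (r * g s₁) :=
      intervalIntegral.integral_eq_sub_of_hasDerivAt (fun x _ => hhd x)
        (hcont.intervalIntegrable _ _)
    calc |Real.arcsin (r * g s₂) - Real.arcsin (r * g s₁)|
        = |∫ s in s₁..s₂, h' s| := by rw [heq]
      _ ≤ ∫ s in s₁..s₂, |h' s| := intervalIntegral.abs_integral_le_integral_abs h₁₂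
      _ ≤ ∫ s in s₁..s₂, N s := by
          apply intervalIntegral.integral_mono_on h₁₂
            (hcont.abs.intervalIntegrable _ _) hNint
          exact fun s _ => hb s
  -- take the limit r → 1⁻
  have hc : Continuous fun r : ℝ => |Real.arcsin (r * g s₂) - Real.arcsin (r * g s₁)| := by
    continuity
  have hlim : Filter.Tendsto (fun r : ℝ => |Real.arcsin (r * g s₂) - Real.arcsin (r * g s₁)|)
      (nhdsWithin 1 (Set.Iio 1)) (nhds |Real.arcsin (g s₂) - Real.arcsin (g s₁)|) := by
    have := (hc.tendsto 1).mono_left (nhdsWithin_le_nhds (s := Set.Iio 1))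
    simpa using this
  refine le_of_tendsto hlim ?_
  have hmem : Set.Ioo (0:ℝ) 1 ∈ nhdsWithin (1:ℝ) (Set.Iio 1) :=
    Ioo_mem_nhdsLT_of_mem (by constructor <;> norm_num)
  filter_upwards [hmem] with r hrm using hr r hrm

/-- Two nearly-touching sheets of a bounded-curvature planar ramp with opposed
tangents are separated by a definite amount of arclength: if `σ` is a unit-speed
planar ramp (`⟨T, e₁⟩ ≥ 0`) with curvature `|κ| ≤ C`, and `p = σ s₁`, `q = σ s₂`
(`s₁ < s₂`) satisfy `‖p - q‖ < ε` and `⟨T s₁, T s₂⟩ ≤ 0`, then the total turning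
`∫_{s₁}^{s₂} |κ|` is at least `π/2`, and hence `s₂ - s₁ ≥ π/(2C)`. -/
theorem ramp_sheet_separation
    (σ : ℝ → EuclideanSpace ℝ (Fin 2)) (C ε s₁ s₂ : ℝ)
    (hC : 0 < C) (hε : 0 < ε)
    (hσ : ContDiff ℝ 2 σ)
    (hspeed : ∀ s : ℝ, ‖deriv σ s‖ = 1)
    (hramp : ∀ s : ℝ, (0 : ℝ) ≤ inner ℝ (deriv σ s) (EuclideanSpace.single 0 (1 : ℝ)))
    (hcurv : ∀ s : ℝ, ‖deriv (deriv σ) s‖ ≤ C)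
    (hlt : s₁ < s₂)
    (hclose : ‖σ s₁ - σ s₂‖ < ε)
    (hopp : (inner ℝ (deriv σ s₁) (deriv σ s₂) : ℝ) ≤ 0) :
    π / 2 ≤ ∫ s in s₁..s₂, ‖deriv (deriv σ) s‖ ∧ π / (2 * C) ≤ s₂ - s₁ := by
  set T := deriv σ with hT
  set T' := deriv (deriv σ) with hT'
  have h1 : ContDiff ℝ 1 T :=
    ((contDiff_succ_iff_deriv (n := 1)).mp (by norm_num at hσ ⊢; exact hσ)).2.2
  have hT'c : Continuous T' := h1.continuous_deriv le_rfl
  have hTd : ∀ s, HasDerivAt T (T' s) s := fun s => ((h1.differentiable one_ne_zero) s).hasDerivAt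
  set f : ℝ → ℝ := fun s => T s 0 with hfdef
  set g : ℝ → ℝ := fun s => T s 1 with hgdef
  set f' : ℝ → ℝ := fun s => T' s 0 with hf'def
  set g' : ℝ → ℝ := fun s => T' s 1 with hg'def
  have hfd : ∀ s, HasDerivAt f (f' s) s := by
    intro s
    have := (EuclideanSpace.proj (0 : Fin 2)).hasFDerivAt.comp_hasDerivAt s (hTd s)
    show HasDerivAt (fun t => T t 0) (T' s 0) s
    simp [Function.comp, PiLp.proj_apply] at this; exact this
  have hgd : ∀ s, HasDerivAt g (g' s) s := by
    intro s
    have := (EuclideanSpace.proj (1 : Fin 2)).hasFDerivAt.comp_hasDerivAt s (hTd s)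
    show HasDerivAt (fun t => T t 1) (T' s 1) s
    simp [Function.comp, PiLp.proj_apply] at this; exact this
  have hg'c : Continuous g' := (EuclideanSpace.proj (1 : Fin 2)).continuous.comp hT'c
  have hnorm : ∀ x : EuclideanSpace ℝ (Fin 2), ‖x‖ = Real.sqrt (x 0 ^ 2 + x 1 ^ 2) := by
    intro x
    simp [EuclideanSpace.norm_eq, Fin.sum_univ_two]
  have hNeq : (fun s => ‖T' s‖) = fun s => Real.sqrt (f' s ^ 2 + g' s ^ 2) := by
    funext s; exact hnorm (T' s)
  have hNc : Continuous fun s => Real.sqrt (f' s ^ 2 + g' s ^ 2) := by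
    rw [← hNeq]; exact hT'c.norm
  have hunit : ∀ s, f s ^ 2 + g s ^ 2 = 1 := by
    intro s
    have h := hspeed s
    rw [hnorm] at h
    have hsq := Real.sq_sqrt (by positivity : (0:ℝ) ≤ f s ^ 2 + g s ^ 2)
    rw [h] at hsq
    nlinarith [hsq]
  have hfpos : ∀ s, 0 ≤ f s := by
    intro s
    have := hramp s
    rw [EuclideanSpace.inner_single_right] at this
    simpa using this
    
  have hinner : ∀ x y : EuclideanSpace ℝ (Fin 2), (inner ℝ x y : ℝ) = x 0 * y 0 + x 1 * y 1 := by
    intro x y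
    simp [PiLp.inner_apply, Fin.sum_univ_two]
    ring
  have hopp' : f s₁ * f s₂ + g s₁ * g s₂ ≤ 0 := by
    have := hopp
    rw [hinner] at this
    linarith
  have hg1 : ∀ s, -1 ≤ g s ∧ g s ≤ 1 := by
    intro s
    constructor <;> nlinarith [hunit s, sq_nonneg (f s)]
  have hfg : ∀ s, f s = Real.sqrt (1 - g s ^ 2) := by
    intro s
    have h : f s ^ 2 = 1 - g s ^ 2 := by linarith [hunit s]
    rw [← h, Real.sqrt_sq (hfpos s)]
  -- the tangents differ by an angle of at least π/2
  set θ₁ := Real.arcsin (g s₁) with hθ₁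
  set θ₂ := Real.arcsin (g s₂) with hθ₂
  have hcos : Real.cos (θ₂ - θ₁) ≤ 0 := by
    rw [Real.cos_sub, hθ₁, hθ₂, Real.sin_arcsin (hg1 s₁).1 (hg1 s₁).2,
      Real.sin_arcsin (hg1 s₂).1 (hg1 s₂).2, Real.cos_arcsin, Real.cos_arcsin,
      ← hfg, ← hfg]
    linarith [hopp']
  have hangle : π / 2 ≤ |θ₂ - θ₁| := by
    by_contra h
    push_neg at h
    rw [abs_lt] at h
    have := Real.cos_pos_of_mem_Ioo (x := θ₂ - θ₁) ⟨by linarith [h.1], h.2⟩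
    linarith
  have hmain : π / 2 ≤ ∫ s in s₁..s₂, ‖T' s‖ := by
    have hle := ramp_arcsin_diff_le f g f' g' s₁ s₂ hlt.le hfd hgd hg'c hNc hunit hfpos
    calc π / 2 ≤ |θ₂ - θ₁| := hangle
      _ ≤ ∫ s in s₁..s₂, Real.sqrt (f' s ^ 2 + g' s ^ 2) := hle
      _ = ∫ s in s₁..s₂, ‖T' s‖ := by rw [hNeq]
  refine ⟨hmain, ?_⟩
  have hCle : (∫ s in s₁..s₂, ‖T' s‖) ≤ C * (s₂ - s₁) := by
    have h := intervalIntegral.integral_mono_on hlt.le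
      (hT'c.norm.intervalIntegrable s₁ s₂) (_root_.intervalIntegrable_const (μ := MeasureTheory.volume) (c := C))
      (fun s _ => hcurv s)
    rw [intervalIntegral.integral_const, smul_eq_mul] at h
    linarith
  rw [div_le_iff₀ (by positivity)]
  nlinarith [hmain, hCle]
end
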